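/- Let M be an n×n real matrix of type 1 with var(Mᵖ) < 1 for some positive integer p, let E be the unique vector with ME = E and entries summing to 1, and let P = E·J (each column of P equals E). Then Mᵏ → P as k → ∞. -/

import Mathlib

/-!
If the coordinates of `x` sum to zero, splitting `x = x⁺ - x⁻` (with `∑ x⁺ = ∑ x⁻ = s`) gives
`s • A x = ∑ⱼ ∑ₖ x⁺ⱼ x⁻ₖ (Aⱼ - Aₖ)`, whence `‖A x‖₁ ≤ var A * ‖x‖₁`. Powers of a type 1 matrix
preserve coordinate sums, so for such `x` the norms `‖Mᵏ x‖₁` shrink by the factor `var (Mᵖ) < 1`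
every `p` steps and tend to `0`. Taking `x = eⱼ - E`, for which `Mᵏ x` is the `j`-th column of
`Mᵏ - P`, gives the convergence.
-/

open Matrix Filter Topology

/-- The column variation of a real matrix: half the maximum ℓ¹-distance
between two columns. -/
noncomputable def var {m n : ℕ} (A : Matrix (Fin m) (Fin n) ℝ) : ℝ :=
  (1/2) * ⨆ j : Fin n, ⨆ k : Fin n, ∑ i, |A i j - A i k|

lemma var_nonneg {m n : ℕ} (A : Matrix (Fin m) (Fin n) ℝ) : 0 ≤ var A :=
  mul_nonneg (by norm_num) <| Real.iSup_nonneg fun _ => Real.iSup_nonneg fun _ =>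
    Finset.sum_nonneg fun _ _ => abs_nonneg _

lemma sum_abs_sub_le_two_mul_var {m n : ℕ} (A : Matrix (Fin m) (Fin n) ℝ) (j k : Fin n) :
    ∑ i, |A i j - A i k| ≤ 2 * var A := by
  have h := (le_ciSup (Finite.bddAbove_range _) k).trans (le_ciSup (Finite.bddAbove_range
    fun j => ⨆ k : Fin n, ∑ i, |A i j - A i k|) j)
  rw [var]
  linarith

lemma sum_mul_mulVec_sub_apply {m n : Type*} [Fintype n] (A : Matrix m n ℝ) {u v : n → ℝ}
    (huv : ∑ j, u j = ∑ j, v j) (i : m) :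
    (∑ j, u j) * (A *ᵥ (u - v)) i = ∑ j, ∑ k, u j * v k * (A i j - A i k) := by
  simp only [Pi.sub_apply, mulVec, dotProduct, mul_sub, Finset.sum_sub_distrib]
  congr 1
  · rw [huv, Finset.sum_mul_sum, Finset.sum_comm]
    exact Finset.sum_congr rfl fun _ _ => Finset.sum_congr rfl fun _ _ => by ring
  · rw [Finset.sum_mul_sum]
    exact Finset.sum_congr rfl fun _ _ => Finset.sum_congr rfl fun _ _ => by ring

lemma sum_abs_mulVec_sub_le_var_mul {m n : ℕ} (A : Matrix (Fin m) (Fin n) ℝ) {u v : Fin n → ℝ}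
    (hu : 0 ≤ u) (hv : 0 ≤ v) (huv : ∑ j, u j = ∑ j, v j) :
    ∑ i, |(A *ᵥ (u - v)) i| ≤ var A * (∑ j, u j + ∑ j, v j) := by
  rcases (Finset.sum_nonneg fun j _ => hu j : 0 ≤ ∑ j, u j).eq_or_lt with hs | hs
  · have hu0 : u = 0 := funext fun j =>
      (Finset.sum_eq_zero_iff_of_nonneg fun j _ => hu j).1 hs.symm j (Finset.mem_univ j)
    have hv0 : v = 0 := funext fun j =>
      (Finset.sum_eq_zero_iff_of_nonneg fun j _ => hv j).1 (huv ▸ hs.symm) j (Finset.mem_univ j)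
    simp [hu0, hv0]
  refine le_of_mul_le_mul_left ?_ hs
  calc (∑ j, u j) * ∑ i, |(A *ᵥ (u - v)) i|
      = ∑ i, |∑ j, ∑ k, u j * v k * (A i j - A i k)| := by
        simp_rw [Finset.mul_sum, ← sum_mul_mulVec_sub_apply A huv, abs_mul, abs_of_pos hs]
    _ ≤ ∑ i, ∑ j, ∑ k, u j * v k * |A i j - A i k| := by
        refine Finset.sum_le_sum fun i _ => (Finset.abs_sum_le_sum_abs _ _).trans <|
          Finset.sum_le_sum fun j _ => (Finset.abs_sum_le_sum_abs _ _).trans_eq ?_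
        simp_rw [abs_mul, abs_of_nonneg (hu j), abs_of_nonneg (hv _)]
    _ = ∑ j, ∑ k, u j * v k * ∑ i, |A i j - A i k| := by
        simp_rw [Finset.mul_sum]
        rw [Finset.sum_comm]
        exact Finset.sum_congr rfl fun _ _ => Finset.sum_comm
    _ ≤ (∑ j, ∑ k, u j * v k) * (2 * var A) := by
        simp_rw [Finset.sum_mul]
        exact Finset.sum_le_sum fun j _ => Finset.sum_le_sum fun k _ =>
          mul_le_mul_of_nonneg_left (sum_abs_sub_le_two_mul_var A j k) (mul_nonneg (hu j) (hv k))
    _ = (∑ j, u j) * (var A * (∑ j, u j + ∑ j, v j)) := by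
        rw [← Finset.sum_mul_sum, ← huv]
        ring

lemma sum_abs_mulVec_le_var_mul {m n : ℕ} (A : Matrix (Fin m) (Fin n) ℝ) {x : Fin n → ℝ}
    (hx : ∑ j, x j = 0) : ∑ i, |(A *ᵥ x) i| ≤ var A * ∑ j, |x j| := by
  have hparts : ∑ j, x⁺ j = ∑ j, x⁻ j := by
    rw [← sub_eq_zero, ← Finset.sum_sub_distrib, ← hx]
    exact Finset.sum_congr rfl fun j _ => posPart_sub_negPart (x j)
  have h := sum_abs_mulVec_sub_le_var_mul A (posPart_nonneg x) (negPart_nonneg x) hparts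
  simpa only [posPart_sub_negPart, ← Finset.sum_add_distrib, Pi.posPart_apply, Pi.negPart_apply,
    posPart_add_negPart] using h

lemma sum_mulVec_of_sum_col_eq_one {m n : Type*} [Fintype m] [Fintype n] {A : Matrix m n ℝ}
    (hA : ∀ k, ∑ i, A i k = 1) (x : n → ℝ) : ∑ i, (A *ᵥ x) i = ∑ j, x j := by
  simp only [mulVec, dotProduct]
  rw [Finset.sum_comm]
  simp [← Finset.sum_mul, hA]

lemma sum_col_pow_eq_one {n : Type*} [Fintype n] [DecidableEq n] {M : Matrix n n ℝ}
    (hM : ∀ k, ∑ i, M i k = 1) (p : ℕ) (k : n) : ∑ i, (M ^ p) i k = 1 := by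
  induction p generalizing k with
  | zero => simp [one_apply]
  | succ p ih =>
    rw [pow_succ']
    exact (sum_mulVec_of_sum_col_eq_one hM fun l => (M ^ p) l k).trans (ih k)

lemma pow_mulVec_eq_self {n : Type*} [Fintype n] [DecidableEq n] {M : Matrix n n ℝ} {x : n → ℝ}
    (hx : M *ᵥ x = x) (p : ℕ) : (M ^ p) *ᵥ x = x := by
  induction p with
  | zero => simp
  | succ p ih => rw [pow_succ', ← mulVec_mulVec, ih, hx]

lemma tendsto_zero_of_le_mul_shift {g : ℕ → ℝ} {c : ℝ} {p : ℕ} (hp : 0 < p) (hc0 : 0 ≤ c)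
    (hc1 : c < 1) (hg0 : ∀ k, 0 ≤ g k) (hg : ∀ k, g (k + p) ≤ c * g k) :
    Tendsto g atTop (𝓝 0) := by
  set B := ∑ r ∈ Finset.range p, g r
  have hbound : ∀ k, g k ≤ c ^ (k / p) * B := by
    intro k
    induction k using Nat.strong_induction_on with
    | _ k ih =>
      rcases lt_or_ge k p with hk | hk
      · rw [Nat.div_eq_of_lt hk, pow_zero, one_mul]
        exact Finset.single_le_sum (fun r _ => hg0 r) (Finset.mem_range.2 hk)
      · obtain ⟨r, rfl⟩ := Nat.exists_eq_add_of_le' hk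
        calc g (r + p) ≤ c * g r := hg r
          _ ≤ c * (c ^ (r / p) * B) := mul_le_mul_of_nonneg_left (ih r (by omega)) hc0
          _ = c ^ ((r + p) / p) * B := by rw [Nat.add_div_right r hp, pow_succ]; ring
  have hlim : Tendsto (fun k => c ^ (k / p) * B) atTop (𝓝 0) := by
    simpa using ((tendsto_pow_atTop_nhds_zero_of_lt_one hc0 hc1).comp
      (Nat.tendsto_div_const_atTop hp.ne')).mul_const B
  exact squeeze_zero hg0 hbound hlim

lemma tendsto_sum_abs_pow_mulVec_nhds_zero {n : ℕ} {M : Matrix (Fin n) (Fin n) ℝ}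
    (hM : ∀ k, ∑ i, M i k = 1) {p : ℕ} (hp : 0 < p) (hvar : var (M ^ p) < 1) {x : Fin n → ℝ}
    (hx : ∑ j, x j = 0) : Tendsto (fun k => ∑ i, |(M ^ k *ᵥ x) i|) atTop (𝓝 0) := by
  refine tendsto_zero_of_le_mul_shift hp (var_nonneg _) hvar
    (fun k => Finset.sum_nonneg fun i _ => abs_nonneg _) fun k => ?_
  rw [add_comm, pow_add, ← mulVec_mulVec]
  have hsum : ∑ i, (M ^ k *ᵥ x) i = 0 :=
    (sum_mulVec_of_sum_col_eq_one (sum_col_pow_eq_one hM k) x).trans hx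
  exact sum_abs_mulVec_le_var_mul _ hsum

theorem stmt6 {n : ℕ} (M : Matrix (Fin n) (Fin n) ℝ)
    (hM : ∀ k, ∑ i, M i k = 1) (p : ℕ) (hp : 0 < p)
    (hvar : var (M ^ p) < 1) (E : Fin n → ℝ)
    (hE : M.mulVec E = E) (hEsum : ∑ j, E j = 1)
    (P : Matrix (Fin n) (Fin n) ℝ) (hP : ∀ i j, P i j = E i) :
    Tendsto (fun k : ℕ => M ^ k) atTop (𝓝 P) := by
  refine tendsto_pi_nhds.2 fun i => tendsto_pi_nhds.2 fun j => ?_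
  have hx : ∑ l, (Pi.single j 1 - E : Fin n → ℝ) l = 0 := by simp [Finset.sum_sub_distrib, hEsum]
  have hcol : ∀ k, (M ^ k *ᵥ (Pi.single j 1 - E)) i = (M ^ k) i j - P i j := by
    intro k
    rw [mulVec_sub, pow_mulVec_eq_self hE, hP]
    simp [mulVec_single]
  rw [← tendsto_sub_nhds_zero_iff]
  refine squeeze_zero_norm (fun k => ?_) (tendsto_sum_abs_pow_mulVec_nhds_zero hM hp hvar hx)
  rw [← hcol, Real.norm_eq_abs]
  exact Finset.single_le_sum (f := fun l => |_|) (fun l _ => abs_nonneg _) (Finset.mem_univ i)
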